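/- For c = 4/9, the function f_c(t) = (t⁴−1)/(c t⁴ + (2−c) t³ + (2−c) t + c) − 2 arctan((t−1)/(t+1)) satisfies f_c(t) > 0 for all t > 1. -/

import Mathlib

/-
`f_c 1 = 0`, and `arctan ((t - 1) / (t + 1))` has the derivative `1 / (t ^ 2 + 1)` of `arctan t`, so
`f_c'` is a rational function. For `c = 4/9` its numerator is `(t - 1) ^ 4` times a polynomial with
positive coefficients, so `f_{4/9}` is strictly increasing on `[1, ∞)`.
-/

noncomputable def f (c t : ℝ) : ℝ :=
  (t ^ 4 - 1) / (c * t ^ 4 + (2 - c) * t ^ 3 + (2 - c) * t + c)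
    - 2 * Real.arctan ((t - 1) / (t + 1))

open Real Set

def fDenom (c t : ℝ) : ℝ := c * t ^ 4 + (2 - c) * t ^ 3 + (2 - c) * t + c

lemma fDenom_pos {c t : ℝ} (hc₀ : 0 < c) (hc₂ : c ≤ 2) (ht : 0 ≤ t) : 0 < fDenom c t := by
  have : 0 ≤ 2 - c := by linarith
  unfold fDenom
  positivity

lemma hasDerivAt_fDenom (c t : ℝ) :
    HasDerivAt (fDenom c) (4 * c * t ^ 3 + 3 * (2 - c) * t ^ 2 + (2 - c)) t := by
  exact ((((hasDerivAt_pow 4 t).const_mul c).add ((hasDerivAt_pow 3 t).const_mul (2 - c))).add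
    ((hasDerivAt_id t).const_mul (2 - c))).add_const c |>.congr_deriv (by push_cast; ring)

lemma hasDerivAt_arctan_sub_one_div_add_one {t : ℝ} (ht : t + 1 ≠ 0) :
    HasDerivAt (fun s ↦ arctan ((s - 1) / (s + 1))) (1 / (t ^ 2 + 1)) t := by
  have hq : HasDerivAt (fun s : ℝ ↦ (s - 1) / (s + 1)) (2 / (t + 1) ^ 2) t :=
    ((hasDerivAt_id' t).sub_const 1 |>.div ((hasDerivAt_id' t).add_const 1) ht).congr_deriv
      (by ring)
  exact ((hasDerivAt_arctan _).comp t hq).congr_deriv (by field_simp; ring)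

lemma hasDerivAt_f {c t : ℝ} (hD : fDenom c t ≠ 0) (ht : t + 1 ≠ 0) :
    HasDerivAt (f c)
      ((4 * t ^ 3 * fDenom c t - (t ^ 4 - 1) * (4 * c * t ^ 3 + 3 * (2 - c) * t ^ 2 + (2 - c)))
        / fDenom c t ^ 2 - 2 / (t ^ 2 + 1)) t := by
  have hnum : HasDerivAt (fun s : ℝ ↦ s ^ 4 - 1) (4 * t ^ 3) t := by
    simpa using (hasDerivAt_pow 4 t).sub_const 1
  exact ((hnum.div (hasDerivAt_fDenom c t) hD).sub
    ((hasDerivAt_arctan_sub_one_div_add_one ht).const_mul 2)).congr_deriv (by ring)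

lemma f_one (c : ℝ) : f c 1 = 0 := by
  simp [f]

/-- For general `c` the numerator of `f_c'` is `(32 - 72 c) (t - 1) ^ 2 (3 t - 2)` modulo
`(t - 1) ^ 4`; `c = 4/9` is the value that kills this term. -/
lemma hasDerivAt_f_four_ninths {t : ℝ} (ht : 0 ≤ t) :
    HasDerivAt (f (4 / 9))
      ((t - 1) ^ 4 * (94 + 152 * t + 156 * t ^ 2 + 152 * t ^ 3 + 94 * t ^ 4)
        / (81 * fDenom (4 / 9) t ^ 2 * (t ^ 2 + 1))) t := by
  have hD := fDenom_pos (c := 4 / 9) (by norm_num) (by norm_num) ht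
  convert hasDerivAt_f hD.ne' (by positivity) using 1
  unfold fDenom at hD ⊢
  field_simp
  ring

lemma strictMonoOn_f_four_ninths : StrictMonoOn (f (4 / 9)) (Ici 1) := by
  have hderiv : ∀ t ∈ Ici (1 : ℝ), HasDerivAt (f (4 / 9)) _ t := fun t ht ↦
    hasDerivAt_f_four_ninths (zero_le_one.trans ht)
  refine strictMonoOn_of_deriv_pos (convex_Ici 1)
    (fun t ht ↦ (hderiv t ht).continuousAt.continuousWithinAt) fun t ht ↦ ?_
  rw [interior_Ici] at ht
  have ht₀ : 0 < t := zero_lt_one.trans ht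
  have hD : 0 < fDenom (4 / 9) t := fDenom_pos (by norm_num) (by norm_num) ht₀.le
  have ht₁ : 0 < t - 1 := sub_pos.mpr ht
  rw [(hderiv t (mem_Ici.mpr ht.le)).deriv]
  positivity

theorem stmt_11 : ∀ t : ℝ, 1 < t → 0 < f (4 / 9) t := by
  intro t ht
  simpa [f_one] using strictMonoOn_f_four_ninths self_mem_Ici (mem_Ici.mpr ht.le) ht
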